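/- arXiv:2506.20546 — 2 statements merged into one kernel-verified Lean document; each statement's English description precedes it below -/
import Mathlib

section
/- (Lemma 6: single-step ZOCEG bound.) In the min-max setup, assume additionally that f is L-smooth on all of ℝ^{d_x} × ℝ^{d_y} and that the step size satisfies 0 < η L ≤ 1/2. Fix z_k = (x_k, y_k) ∈ Z and a smoothing radius r_k > 0. Define the coordinate gradient estimators ĝ_k^x = Σ_{i=1}^{d_x} ((f(x_k + r_k e_i, y_k) − f(x_k, y_k))/r_k) e_i and ĝ_k^y = Σ_{j=1}^{d_y} ((f(x_k, y_k + r_k e_j) − f(x_k, y_k))/r_k) e_j, the intermediate point x_k^+ = P_X[x_k − η ĝ_k^x], y_k^+ = P_Y[y_k + η ĝ_k^y], z_k^+ = (x_k^+, y_k^+), the estimators ĝ_k^{x,+} = Σ_{i=1}^{d_x} ((f(x_k^+ + r_k e_i, y_k^+) − f(x_k^+, y_k^+))/r_k) e_i and ĝ_k^{y,+} = Σ_{j=1}^{d_y} ((f(x_k^+, y_k^+ + r_k e_j) − f(x_k^+, y_k^+))/r_k) e_j, and the next iterate x_{k+1} = P_X[x_k − η ĝ_k^{x,+}], y_{k+1}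 = P_Y[y_k + η ĝ_k^{y,+}], z_{k+1} = (x_{k+1}, y_{k+1}), where P_X and P_Y are Euclidean projections onto X and Y. Then for every z ∈ Z, ⟨η F(z_k^+), z_k^+ − z⟩ ≤ H_k(z) − H_{k+1}(z) + (3/2) η L r_k (√d_x + √d_y) D̃, where H_k(z) = (1/2)‖z_k − z‖² and H_{k+1}(z) = (1/2)‖z_{k+1} − z‖². -/
set_option autoImplicit false

open scoped RealInnerProductSpace

noncomputable section

/-- `ℝ^d` as a Euclidean space. -/
abbrev Euc (n : ℕ) := EuclideanSpace ℝ (Fin n)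

/-- First block (the `x`-part) of `z ∈ ℝ^{d_x + d_y}`. -/
def xpart {dx dy : ℕ} (z : Euc (dx + dy)) : Euc dx := WithLp.toLp 2 (fun i => z (Fin.castAdd dy i))

/-- Second block (the `y`-part) of `z ∈ ℝ^{d_x + d_y}`. -/
def ypart {dx dy : ℕ} (z : Euc (dx + dy)) : Euc dy := WithLp.toLp 2 (fun j => z (Fin.natAdd dx j))

/-- Concatenation `(a, b) ∈ ℝ^{d_x + d_y}` of `a ∈ ℝ^{d_x}` and `b ∈ ℝ^{d_y}`. -/
def joinE {dx dy : ℕ} (a : Euc dx) (b : Euc dy) : Euc (dx + dy) :=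
  WithLp.toLp 2 (fun k : Fin (dx + dy) => (Fin.addCases (fun i => a i) (fun j => b j) k : ℝ))

/-- The set `Z = X × Y` viewed inside `ℝ^{d_x + d_y}`. -/
def Zprod {dx dy : ℕ} (X : Set (Euc dx)) (Y : Set (Euc dy)) : Set (Euc (dx + dy)) :=
  {z | xpart z ∈ X ∧ ypart z ∈ Y}

/-- `f` as a function of the joint variable `z = (x, y)`. -/
def fjoin {dx dy : ℕ} (f : Euc dx → Euc dy → ℝ) (z : Euc (dx + dy)) : ℝ :=
  f (xpart z) (ypart z)

/-- The monotone operator `F(z) = (∇_x f(x,y), -∇_y f(x,y))`. -/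
def Fop {dx dy : ℕ} (f : Euc dx → Euc dy → ℝ) (z : Euc (dx + dy)) : Euc (dx + dy) :=
  joinE (gradient (fun x' => f x' (ypart z)) (xpart z))
    (-(gradient (fun y' => f (xpart z) y') (ypart z)))

/-- The `2d`-point coordinate gradient estimator of `h` at `z` with smoothing radius `r`. -/
def cooGE {n : ℕ} (h : Euc n → ℝ) (r : ℝ) (x : Euc n) : Euc n :=
  ∑ i : Fin n, ((h (x + r • EuclideanSpace.single i 1) - h x) / r) • EuclideanSpace.single i 1

/-- `P` is the Euclidean (nearest-point) projection onto the set `Z`. -/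
def IsProjOn {E : Type*} [NormedAddCommGroup E] (Z : Set E) (P : E → E) : Prop :=
  ∀ u, P u ∈ Z ∧ ∀ w ∈ Z, dist u (P u) ≤ dist u w


/-! ### Auxiliary lemmas -/

section AuxHelpers

variable {dx dy : ℕ}

@[simp] lemma xpart_joinE (a : Euc dx) (b : Euc dy) : xpart (joinE a b) = a := by
  ext i; simp [xpart, joinE]

@[simp] lemma ypart_joinE (a : Euc dx) (b : Euc dy) : ypart (joinE a b) = b := by
  ext j; simp [ypart, joinE]

lemma joinE_xy (z : Euc (dx + dy)) : joinE (xpart z) (ypart z) = z := by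
  ext k
  refine Fin.addCases (fun i => ?_) (fun j => ?_) k <;> simp [joinE, xpart, ypart]

lemma joinE_add (a c : Euc dx) (b d : Euc dy) :
    joinE a b + joinE c d = joinE (a + c) (b + d) := by
  ext k
  refine Fin.addCases (fun i => ?_) (fun j => ?_) k <;> simp [joinE, PiLp.add_apply]

lemma joinE_sub (a c : Euc dx) (b d : Euc dy) :
    joinE a b - joinE c d = joinE (a - c) (b - d) := by
  ext k
  refine Fin.addCases (fun i => ?_) (fun j => ?_) k <;> simp [joinE, PiLp.sub_apply]

lemma joinE_smul (c : ℝ) (a : Euc dx) (b : Euc dy) :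
    c • joinE a b = joinE (c • a) (c • b) := by
  ext k
  refine Fin.addCases (fun i => ?_) (fun j => ?_) k <;> simp [joinE, PiLp.smul_apply]

lemma xpart_sub (u v : Euc (dx + dy)) : xpart (u - v) = xpart u - xpart v := by
  ext i; simp [xpart, PiLp.sub_apply]

lemma ypart_sub (u v : Euc (dx + dy)) : ypart (u - v) = ypart u - ypart v := by
  ext j; simp [ypart, PiLp.sub_apply]

lemma inner_joinE (a c : Euc dx) (b d : Euc dy) :
    ⟪joinE a b, joinE c d⟫ = ⟪a, c⟫ + ⟪b, d⟫ := by
  simp only [PiLp.inner_apply, RCLike.inner_apply, conj_trivial]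
  rw [Fin.sum_univ_add]
  congr 1 <;> { apply Finset.sum_congr rfl; intro i _; simp [joinE] }

lemma normsq_joinE (a : Euc dx) (b : Euc dy) :
    ‖joinE a b‖ ^ 2 = ‖a‖ ^ 2 + ‖b‖ ^ 2 := by
  have h1 := inner_joinE a a b b
  rw [real_inner_self_eq_norm_sq, real_inner_self_eq_norm_sq, real_inner_self_eq_norm_sq] at h1
  exact h1

lemma norm_joinE_le (a : Euc dx) (b : Euc dy) : ‖joinE a b‖ ≤ ‖a‖ + ‖b‖ := by
  have h := normsq_joinE a b
  nlinarith [norm_nonneg (joinE a b), norm_nonneg a, norm_nonneg b,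
    mul_nonneg (norm_nonneg a) (norm_nonneg b)]

lemma norm_eq_of_sq_eq {a b : ℝ} (h : a ^ 2 = b ^ 2) (ha : 0 ≤ a) (hb : 0 ≤ b) : a = b := by
  nlinarith

lemma norm_xpart_le (w : Euc (dx + dy)) : ‖xpart w‖ ≤ ‖w‖ := by
  have h := normsq_joinE (xpart w) (ypart w)
  rw [joinE_xy] at h
  nlinarith [norm_nonneg (xpart w), norm_nonneg (ypart w), norm_nonneg w, sq_nonneg ‖ypart w‖]

lemma norm_ypart_le (w : Euc (dx + dy)) : ‖ypart w‖ ≤ ‖w‖ := by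
  have h := normsq_joinE (xpart w) (ypart w)
  rw [joinE_xy] at h
  nlinarith [norm_nonneg (xpart w), norm_nonneg (ypart w), norm_nonneg w, sq_nonneg ‖xpart w‖]

lemma norm_joinE_zero_r (a : Euc dx) : ‖joinE a (0 : Euc dy)‖ = ‖a‖ := by
  have h := normsq_joinE a (0 : Euc dy)
  rw [norm_zero] at h
  refine norm_eq_of_sq_eq ?_ (norm_nonneg _) (norm_nonneg _)
  simpa using h

lemma norm_joinE_zero_l (b : Euc dy) : ‖joinE (0 : Euc dx) b‖ = ‖b‖ := by
  have h := normsq_joinE (0 : Euc dx) b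
  rw [norm_zero] at h
  refine norm_eq_of_sq_eq ?_ (norm_nonneg _) (norm_nonneg _)
  simpa using h

/-- The linear embedding `a ↦ (a, 0)`. -/
def JxL : Euc dx →L[ℝ] Euc (dx + dy) :=
  LinearMap.toContinuousLinearMap
  { toFun := fun a => joinE a 0
    map_add' := fun a b => by rw [joinE_add, add_zero]
    map_smul' := fun c a => by rw [joinE_smul, smul_zero]; rfl }

/-- The linear embedding `b ↦ (0, b)`. -/
def JyL : Euc dy →L[ℝ] Euc (dx + dy) :=
  LinearMap.toContinuousLinearMap
  { toFun := fun b => joinE 0 b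
    map_add' := fun a b => by rw [joinE_add, add_zero]
    map_smul' := fun c a => by rw [joinE_smul, smul_zero]; rfl }

@[simp] lemma JxL_apply (a : Euc dx) : (JxL (dy := dy)) a = joinE a 0 := rfl
@[simp] lemma JyL_apply (b : Euc dy) : (JyL (dx := dx)) b = joinE 0 b := rfl

lemma hasGradientAt_fst (f : Euc dx → Euc dy → ℝ) (hd : Differentiable ℝ (fjoin f))
    (x : Euc dx) (y : Euc dy) :
    HasGradientAt (fun x' => f x' y) (xpart (gradient (fjoin f) (joinE x y))) x := by
  set z := joinE x y with hz
  set G := gradient (fjoin f) z with hG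
  have hFz : HasFDerivAt (fjoin f) (InnerProductSpace.toDual ℝ _ G) z :=
    ((hd z).hasGradientAt).hasFDerivAt
  have hJ : HasFDerivAt (fun x' : Euc dx => joinE x' y) (JxL (dy := dy)) x := by
    have he : (fun x' : Euc dx => joinE x' y) = fun x' => JxL (dy := dy) x' + joinE 0 y := by
      funext a; rw [JxL_apply, joinE_add, add_zero, zero_add]
    rw [he]
    exact (JxL.hasFDerivAt).add_const _
  have hcomp : HasFDerivAt (fun x' => f x' y)
      ((InnerProductSpace.toDual ℝ _ G).comp (JxL (dy := dy))) x := by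
    have h2 := hFz.comp x hJ
    have he : (fjoin f ∘ fun x' : Euc dx => joinE x' y) = fun x' => f x' y := by
      funext a; simp [fjoin]
    rwa [he] at h2
  have heq : (InnerProductSpace.toDual ℝ _ G).comp (JxL (dy := dy))
      = InnerProductSpace.toDual ℝ _ (xpart G) := by
    ext v
    simp only [ContinuousLinearMap.comp_apply, JxL_apply, InnerProductSpace.toDual_apply_apply]
    calc ⟪G, joinE v 0⟫ = ⟪joinE (xpart G) (ypart G), joinE v 0⟫ := by rw [joinE_xy]
      _ = ⟪xpart G, v⟫ + ⟪ypart G, 0⟫ := inner_joinE _ _ _ _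
      _ = ⟪xpart G, v⟫ := by simp
  rw [heq] at hcomp
  simpa using hcomp.hasGradientAt

lemma hasGradientAt_snd (f : Euc dx → Euc dy → ℝ) (hd : Differentiable ℝ (fjoin f))
    (x : Euc dx) (y : Euc dy) :
    HasGradientAt (fun y' => f x y') (ypart (gradient (fjoin f) (joinE x y))) y := by
  set z := joinE x y with hz
  set G := gradient (fjoin f) z with hG
  have hFz : HasFDerivAt (fjoin f) (InnerProductSpace.toDual ℝ _ G) z :=
    ((hd z).hasGradientAt).hasFDerivAt
  have hJ : HasFDerivAt (fun y' : Euc dy => joinE x y') (JyL (dx := dx)) y := by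
    have he : (fun y' : Euc dy => joinE x y') = fun y' => JyL (dx := dx) y' + joinE x 0 := by
      funext b; rw [JyL_apply, joinE_add, zero_add, add_zero]
    rw [he]
    exact (JyL.hasFDerivAt).add_const _
  have hcomp : HasFDerivAt (fun y' => f x y')
      ((InnerProductSpace.toDual ℝ _ G).comp (JyL (dx := dx))) y := by
    have h2 := hFz.comp y hJ
    have he : (fjoin f ∘ fun y' : Euc dy => joinE x y') = fun y' => f x y' := by
      funext b; simp [fjoin]
    rwa [he] at h2
  have heq : (InnerProductSpace.toDual ℝ _ G).comp (JyL (dx := dx))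
      = InnerProductSpace.toDual ℝ _ (ypart G) := by
    ext v
    simp only [ContinuousLinearMap.comp_apply, JyL_apply, InnerProductSpace.toDual_apply_apply]
    calc ⟪G, joinE 0 v⟫ = ⟪joinE (xpart G) (ypart G), joinE 0 v⟫ := by rw [joinE_xy]
      _ = ⟪xpart G, 0⟫ + ⟪ypart G, v⟫ := inner_joinE _ _ _ _
      _ = ⟪ypart G, v⟫ := by simp
  rw [heq] at hcomp
  simpa using hcomp.hasGradientAt

lemma gradx_val (f : Euc dx → Euc dy → ℝ) (hd : Differentiable ℝ (fjoin f))
    (x : Euc dx) (y : Euc dy) :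
    gradient (fun x' => f x' y) x = xpart (gradient (fjoin f) (joinE x y)) :=
  (hasGradientAt_fst f hd x y).gradient

lemma grady_val (f : Euc dx → Euc dy → ℝ) (hd : Differentiable ℝ (fjoin f))
    (x : Euc dx) (y : Euc dy) :
    gradient (fun y' => f x y') y = ypart (gradient (fjoin f) (joinE x y)) :=
  (hasGradientAt_snd f hd x y).gradient

lemma Fop_eq (f : Euc dx → Euc dy → ℝ) (hd : Differentiable ℝ (fjoin f))
    (z : Euc (dx + dy)) :
    Fop f z = joinE (xpart (gradient (fjoin f) z)) (-(ypart (gradient (fjoin f) z))) := by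
  rw [Fop, gradx_val f hd, grady_val f hd, joinE_xy]

lemma Fop_lip (f : Euc dx → Euc dy → ℝ) (hd : Differentiable ℝ (fjoin f)) (L : ℝ)
    (hsmooth : ∀ z₁ z₂ : Euc (dx + dy),
      ‖gradient (fjoin f) z₁ - gradient (fjoin f) z₂‖ ≤ L * ‖z₁ - z₂‖)
    (z₁ z₂ : Euc (dx + dy)) : ‖Fop f z₁ - Fop f z₂‖ ≤ L * ‖z₁ - z₂‖ := by
  set G := gradient (fjoin f) with hG
  rw [Fop_eq f hd z₁, Fop_eq f hd z₂, joinE_sub]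
  have h1 : ‖joinE (xpart (G z₁) - xpart (G z₂)) (-(ypart (G z₁)) - -(ypart (G z₂)))‖
      = ‖G z₁ - G z₂‖ := by
    refine norm_eq_of_sq_eq ?_ (norm_nonneg _) (norm_nonneg _)
    rw [normsq_joinE]
    have hx : xpart (G z₁) - xpart (G z₂) = xpart (G z₁ - G z₂) := (xpart_sub _ _).symm
    have hy : -(ypart (G z₁)) - -(ypart (G z₂)) = -(ypart (G z₁ - G z₂)) := by
      rw [ypart_sub]; abel
    rw [hx, hy, norm_neg]
    have h2 := normsq_joinE (xpart (G z₁ - G z₂)) (ypart (G z₁ - G z₂))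
    rw [joinE_xy] at h2
    linarith
  rw [h1]
  exact hsmooth z₁ z₂

lemma grad_fst_lip (f : Euc dx → Euc dy → ℝ) (hd : Differentiable ℝ (fjoin f)) (L : ℝ)
    (hsmooth : ∀ z₁ z₂ : Euc (dx + dy),
      ‖gradient (fjoin f) z₁ - gradient (fjoin f) z₂‖ ≤ L * ‖z₁ - z₂‖)
    (b : Euc dy) (a₁ a₂ : Euc dx) :
    ‖gradient (fun x' => f x' b) a₁ - gradient (fun x' => f x' b) a₂‖ ≤ L * ‖a₁ - a₂‖ := by
  rw [gradx_val f hd a₁ b, gradx_val f hd a₂ b, ← xpart_sub]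
  calc ‖xpart (gradient (fjoin f) (joinE a₁ b) - gradient (fjoin f) (joinE a₂ b))‖
      ≤ ‖gradient (fjoin f) (joinE a₁ b) - gradient (fjoin f) (joinE a₂ b)‖ := norm_xpart_le _
    _ ≤ L * ‖joinE a₁ b - joinE a₂ b‖ := hsmooth _ _
    _ = L * ‖a₁ - a₂‖ := by rw [joinE_sub, sub_self, norm_joinE_zero_r]

lemma grad_snd_lip (f : Euc dx → Euc dy → ℝ) (hd : Differentiable ℝ (fjoin f)) (L : ℝ)
    (hsmooth : ∀ z₁ z₂ : Euc (dx + dy),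
      ‖gradient (fjoin f) z₁ - gradient (fjoin f) z₂‖ ≤ L * ‖z₁ - z₂‖)
    (a : Euc dx) (b₁ b₂ : Euc dy) :
    ‖gradient (fun y' => f a y') b₁ - gradient (fun y' => f a y') b₂‖ ≤ L * ‖b₁ - b₂‖ := by
  rw [grady_val f hd a b₁, grady_val f hd a b₂, ← ypart_sub]
  calc ‖ypart (gradient (fjoin f) (joinE a b₁) - gradient (fjoin f) (joinE a b₂))‖
      ≤ ‖gradient (fjoin f) (joinE a b₁) - gradient (fjoin f) (joinE a b₂)‖ := norm_ypart_le _
    _ ≤ L * ‖joinE a b₁ - joinE a b₂‖ := hsmooth _ _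
    _ = L * ‖b₁ - b₂‖ := by rw [joinE_sub, sub_self, norm_joinE_zero_l]

end AuxHelpers

section Descent

variable {n : ℕ}

lemma gradient_continuous (h : Euc n → ℝ) (L : ℝ) (hL : 0 ≤ L)
    (hlip : ∀ a b, ‖gradient h a - gradient h b‖ ≤ L * ‖a - b‖) :
    Continuous (gradient h) := by
  have hl : LipschitzWith (Real.toNNReal L) (gradient h) := by
    apply LipschitzWith.of_dist_le_mul
    intro a b
    rw [dist_eq_norm, dist_eq_norm]
    simpa [Real.coe_toNNReal L hL] using hlip a b
  exact hl.continuous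

lemma descent_bound (h : Euc n → ℝ) (hd : Differentiable ℝ h) (L : ℝ) (hL : 0 ≤ L)
    (hlip : ∀ a b, ‖gradient h a - gradient h b‖ ≤ L * ‖a - b‖)
    (x v : Euc n) (hv : ‖v‖ ≤ 1) (r : ℝ) (hr : 0 ≤ r) :
    |h (x + r • v) - h x - r * ⟪gradient h x, v⟫| ≤ L * r ^ 2 / 2 := by
  set φ' : ℝ → ℝ := fun t => ⟪gradient h (x + t • v), v⟫ with hφ'
  have hderiv : ∀ t : ℝ, HasDerivAt (fun s => h (x + s • v)) (φ' t) t := by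
    intro t
    have hc : HasDerivAt (fun s : ℝ => x + s • v) v t := by
      simpa using ((hasDerivAt_id t).smul_const v).const_add x
    have hf : HasFDerivAt h (InnerProductSpace.toDual ℝ _ (gradient h (x + t • v)))
        (x + t • v) := (hd _).hasGradientAt.hasFDerivAt
    have h2 := hf.comp_hasDerivAt t hc
    simpa [hφ', InnerProductSpace.toDual_apply_apply, Function.comp_def] using h2
  have hcont : Continuous φ' := by
    apply Continuous.inner
    · exact (gradient_continuous h L hL hlip).comp (by continuity)
    · exact continuous_const
  have hFTC : ∫ t in (0:ℝ)..r, φ' t = h (x + r • v) - h x := by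
    have h2 := intervalIntegral.integral_eq_sub_of_hasDerivAt
      (f := fun s => h (x + s • v)) (f' := φ')
      (fun t _ => hderiv t) (hcont.intervalIntegrable 0 r)
    simpa using h2
  have hφ'0 : φ' 0 = ⟪gradient h x, v⟫ := by simp [hφ']
  have hsplit : h (x + r • v) - h x - r * ⟪gradient h x, v⟫
      = ∫ t in (0:ℝ)..r, (φ' t - φ' 0) := by
    rw [intervalIntegral.integral_sub (hcont.intervalIntegrable 0 r)
      (intervalIntegrable_const), hFTC, intervalIntegral.integral_const, hφ'0]
    simp [smul_eq_mul]
  rw [hsplit]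
  have hbound : ∀ t ∈ Set.uIoc (0:ℝ) r, |φ' t - φ' 0| ≤ L * t := by
    intro t ht
    rw [Set.uIoc_of_le hr] at ht
    have ht0 : 0 < t := ht.1
    have h1 : φ' t - φ' 0 = ⟪gradient h (x + t • v) - gradient h x, v⟫ := by
      rw [hφ'0, hφ', ← inner_sub_left]
    rw [h1]
    calc |⟪gradient h (x + t • v) - gradient h x, v⟫|
        ≤ ‖gradient h (x + t • v) - gradient h x‖ * ‖v‖ := abs_real_inner_le_norm _ _
      _ ≤ (L * ‖(x + t • v) - x‖) * 1 := by
          apply mul_le_mul (by simpa using hlip (x + t • v) x) hv (norm_nonneg _)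
          exact mul_nonneg hL (norm_nonneg _)
      _ = L * (|t| * ‖v‖) := by rw [mul_one]; simp [norm_smul]
      _ ≤ L * (|t| * 1) := by
          apply mul_le_mul_of_nonneg_left (mul_le_mul_of_nonneg_left hv (abs_nonneg t)) hL
      _ = L * t := by rw [mul_one, abs_of_pos ht0]
  have hmain : |∫ t in (0:ℝ)..r, (φ' t - φ' 0)| ≤ |∫ t in (0:ℝ)..r, L * t| := by
    have hint : IntervalIntegrable (fun t : ℝ => L * t) MeasureTheory.volume 0 r :=
      (Continuous.intervalIntegrable (by continuity)) 0 r
    have h2 := intervalIntegral.norm_integral_le_abs_of_norm_le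
      (f := fun t => φ' t - φ' 0) (g := fun t : ℝ => L * t) (μ := MeasureTheory.volume)
      (a := 0) (b := r) ?_ hint
    · simpa [Real.norm_eq_abs] using h2
    · filter_upwards [MeasureTheory.ae_restrict_mem measurableSet_uIoc] with t ht
      simpa [Real.norm_eq_abs] using hbound t ht
  calc |∫ t in (0:ℝ)..r, (φ' t - φ' 0)|
      ≤ |∫ t in (0:ℝ)..r, L * t| := hmain
    _ = L * r ^ 2 / 2 := by
        rw [intervalIntegral.integral_const_mul, integral_id]
        have he : L * ((r ^ 2 - 0 ^ 2) / 2) = L * r ^ 2 / 2 := by ring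
        rw [he, abs_of_nonneg (div_nonneg (mul_nonneg hL (sq_nonneg r)) (by norm_num))]

lemma cooGE_apply (h : Euc n → ℝ) (r : ℝ) (x : Euc n) (i : Fin n) :
    cooGE h r x i = (h (x + r • EuclideanSpace.single i 1) - h x) / r := by
  have hmap := map_sum (EuclideanSpace.proj (𝕜 := ℝ) i)
    (fun j : Fin n => ((h (x + r • EuclideanSpace.single j 1) - h x) / r)
      • EuclideanSpace.single j (1:ℝ)) Finset.univ
  have h2 : cooGE h r x i = EuclideanSpace.proj (𝕜 := ℝ) i (cooGE h r x) := rfl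
  rw [h2, cooGE, hmap]
  simp [EuclideanSpace.single_apply]

lemma norm_cooGE_sub_grad (h : Euc n → ℝ) (hd : Differentiable ℝ h) (L : ℝ) (hL : 0 ≤ L)
    (hlip : ∀ a b, ‖gradient h a - gradient h b‖ ≤ L * ‖a - b‖)
    (r : ℝ) (hr : 0 < r) (x : Euc n) :
    ‖cooGE h r x - gradient h x‖ ≤ L * r / 2 * Real.sqrt n := by
  have hcoord : ∀ i : Fin n, |(cooGE h r x - gradient h x) i| ≤ L * r / 2 := by
    intro i
    have hsingle : ‖(EuclideanSpace.single i (1:ℝ))‖ ≤ 1 := by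
      simp [EuclideanSpace.norm_single]
    have hdb := descent_bound h hd L hL hlip x (EuclideanSpace.single i 1) hsingle r hr.le
    have hip : ⟪gradient h x, EuclideanSpace.single i (1:ℝ)⟫ = gradient h x i := by
      rw [EuclideanSpace.inner_single_right]; simp
    rw [hip] at hdb
    have heq : (cooGE h r x - gradient h x) i
        = (h (x + r • EuclideanSpace.single i 1) - h x - r * gradient h x i) / r := by
      rw [PiLp.sub_apply, cooGE_apply]
      field_simp
    rw [heq, abs_div, abs_of_pos hr, div_le_iff₀ hr]
    calc |h (x + r • EuclideanSpace.single i 1) - h x - r * gradient h x i|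
        ≤ L * r ^ 2 / 2 := hdb
      _ = L * r / 2 * r := by ring
  have hnormsq : ‖cooGE h r x - gradient h x‖ ^ 2 ≤ n * (L * r / 2) ^ 2 := by
    rw [EuclideanSpace.norm_eq]
    rw [Real.sq_sqrt (by positivity)]
    calc ∑ i, ‖(cooGE h r x - gradient h x) i‖ ^ 2
        ≤ ∑ _i : Fin n, (L * r / 2) ^ 2 := by
          apply Finset.sum_le_sum
          intro i _
          have h2 := hcoord i
          rw [Real.norm_eq_abs]
          nlinarith [abs_nonneg ((cooGE h r x - gradient h x) i)]
      _ = n * (L * r / 2) ^ 2 := by simp [Finset.sum_const]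
  have h1 : ‖cooGE h r x - gradient h x‖ = Real.sqrt (‖cooGE h r x - gradient h x‖ ^ 2) := by
    rw [Real.sqrt_sq (norm_nonneg _)]
  rw [h1]
  calc Real.sqrt (‖cooGE h r x - gradient h x‖ ^ 2)
      ≤ Real.sqrt (n * (L * r / 2) ^ 2) := Real.sqrt_le_sqrt hnormsq
    _ = Real.sqrt n * (L * r / 2) := by
        rw [Real.sqrt_mul (by positivity), Real.sqrt_sq (by positivity)]
    _ = L * r / 2 * Real.sqrt n := by ring

end Descent

section Estimator

variable {dx dy : ℕ}

lemma estimator_err (f : Euc dx → Euc dy → ℝ) (hd : Differentiable ℝ (fjoin f))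
    (L : ℝ) (hL0 : 0 ≤ L)
    (hsmooth : ∀ z₁ z₂ : Euc (dx + dy),
      ‖gradient (fjoin f) z₁ - gradient (fjoin f) z₂‖ ≤ L * ‖z₁ - z₂‖)
    (r : ℝ) (hr : 0 < r) (a : Euc dx) (b : Euc dy) :
    ‖joinE (cooGE (fun x' => f x' b) r a) (-(cooGE (fun y' => f a y') r b)) - Fop f (joinE a b)‖
      ≤ L * r / 2 * (Real.sqrt dx + Real.sqrt dy) := by
  have hdx : Differentiable ℝ (fun x' => f x' b) :=
    fun a' => (hasGradientAt_fst f hd a' b).hasFDerivAt.differentiableAt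
  have hdy : Differentiable ℝ (fun y' => f a y') :=
    fun b' => (hasGradientAt_snd f hd a b').hasFDerivAt.differentiableAt
  have hx := norm_cooGE_sub_grad (fun x' => f x' b) hdx L hL0
    (grad_fst_lip f hd L hsmooth b) r hr a
  have hy := norm_cooGE_sub_grad (fun y' => f a y') hdy L hL0
    (grad_snd_lip f hd L hsmooth a) r hr b
  have hFop : Fop f (joinE a b)
      = joinE (gradient (fun x' => f x' b) a) (-(gradient (fun y' => f a y') b)) := by
    simp only [Fop, xpart_joinE, ypart_joinE]
  rw [hFop, joinE_sub]
  have hneg : -(cooGE (fun y' => f a y') r b) - -(gradient (fun y' => f a y') b)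
      = -(cooGE (fun y' => f a y') r b - gradient (fun y' => f a y') b) := by abel
  calc ‖joinE (cooGE (fun x' => f x' b) r a - gradient (fun x' => f x' b) a)
        (-(cooGE (fun y' => f a y') r b) - -(gradient (fun y' => f a y') b))‖
      ≤ ‖cooGE (fun x' => f x' b) r a - gradient (fun x' => f x' b) a‖
        + ‖-(cooGE (fun y' => f a y') r b) - -(gradient (fun y' => f a y') b)‖ :=
        norm_joinE_le _ _
    _ = ‖cooGE (fun x' => f x' b) r a - gradient (fun x' => f x' b) a‖
        + ‖cooGE (fun y' => f a y') r b - gradient (fun y' => f a y') b‖ := by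
        rw [hneg, norm_neg]
    _ ≤ L * r / 2 * Real.sqrt dx + L * r / 2 * Real.sqrt dy := add_le_add hx hy
    _ = L * r / 2 * (Real.sqrt dx + Real.sqrt dy) := by ring

end Estimator

section Projection

lemma proj_vi {E : Type*} [NormedAddCommGroup E] [InnerProductSpace ℝ E] {K : Set E}
    (hK : Convex ℝ K) {P : E → E} (hP : IsProjOn K P) (u : E) (w : E) (hw : w ∈ K) :
    ⟪u - P u, w - P u⟫ ≤ 0 := by
  have h1 : ‖u - P u‖ = ⨅ w : K, ‖u - w‖ := by
    haveI : Nonempty K := ⟨⟨P u, (hP u).1⟩⟩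
    refine le_antisymm (le_ciInf ?_) (ciInf_le (⟨0, ?_⟩ : BddBelow (Set.range fun w : K => ‖u - w‖)) ⟨P u, (hP u).1⟩)
    · rintro ⟨v, hv⟩
      have h2 := (hP u).2 v hv
      rwa [dist_eq_norm, dist_eq_norm] at h2
    · rintro x ⟨v, rfl⟩
      exact norm_nonneg _
  exact (norm_eq_iInf_iff_real_inner_le_zero hK (hP u).1).mp h1 w hw

lemma three_point {E : Type*} [NormedAddCommGroup E] [InnerProductSpace ℝ E]
    {u g v z : E} (hvi : ⟪u - g - v, z - v⟫ ≤ 0) :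
    ⟪g, v - z⟫ ≤ 1 / 2 * ‖u - z‖ ^ 2 - 1 / 2 * ‖v - z‖ ^ 2 - 1 / 2 * ‖u - v‖ ^ 2 := by
  have h2 : ‖u - z‖ ^ 2 = ‖u - v‖ ^ 2 + 2 * ⟪u - v, v - z⟫ + ‖v - z‖ ^ 2 := by
    have h1 : u - z = (u - v) + (v - z) := by abel
    rw [h1, norm_add_sq_real]
  have h3 : ⟪u - g - v, z - v⟫ = ⟪u - v, z - v⟫ - ⟪g, z - v⟫ := by
    have he : u - g - v = (u - v) - g := by abel
    rw [he, inner_sub_left]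
  have h4 : ⟪u - v, z - v⟫ = -⟪u - v, v - z⟫ := by
    rw [← inner_neg_right]; congr 1; abel
  have h5 : ⟪g, z - v⟫ = -⟪g, v - z⟫ := by
    rw [← inner_neg_right]; congr 1; abel
  rw [h3, h4, h5] at hvi
  linarith

lemma joint_vi {dx dy : ℕ} {X : Set (Euc dx)} {Y : Set (Euc dy)}
    (hXconv : Convex ℝ X) (hYconv : Convex ℝ Y)
    {PX : Euc dx → Euc dx} (hPX : IsProjOn X PX)
    {PY : Euc dy → Euc dy} (hPY : IsProjOn Y PY)
    (u : Euc (dx + dy)) {w : Euc (dx + dy)} (hw : w ∈ Zprod X Y) :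
    ⟪u - joinE (PX (xpart u)) (PY (ypart u)), w - joinE (PX (xpart u)) (PY (ypart u))⟫ ≤ 0 := by
  have hx := proj_vi hXconv hPX (xpart u) (xpart w) hw.1
  have hy := proj_vi hYconv hPY (ypart u) (ypart w) hw.2
  have h1 : u - joinE (PX (xpart u)) (PY (ypart u))
      = joinE (xpart u - PX (xpart u)) (ypart u - PY (ypart u)) := by
    conv_lhs => rw [← joinE_xy u]
    rw [joinE_sub]
    simp only [xpart_joinE, ypart_joinE]
  have h2 : w - joinE (PX (xpart u)) (PY (ypart u))
      = joinE (xpart w - PX (xpart u)) (ypart w - PY (ypart u)) := by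
    conv_lhs => rw [← joinE_xy w]
    rw [joinE_sub]
  rw [h1, h2, inner_joinE]
  linarith

lemma zprod_bounded {dx dy : ℕ} {X : Set (Euc dx)} {Y : Set (Euc dy)}
    (hX : IsCompact X) (hY : IsCompact Y) : Bornology.IsBounded (Zprod X Y) := by
  have himg : Zprod X Y = (fun p : Euc dx × Euc dy => joinE p.1 p.2) '' (X ×ˢ Y) := by
    ext w
    constructor
    · intro hw
      exact ⟨(xpart w, ypart w), ⟨hw.1, hw.2⟩, joinE_xy w⟩
    · rintro ⟨⟨a, b⟩, ⟨ha, hb⟩, rfl⟩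
      exact ⟨by simpa using ha, by simpa using hb⟩
  have hcont : Continuous (fun p : Euc dx × Euc dy => joinE p.1 p.2) := by
    have he : (fun p : Euc dx × Euc dy => joinE p.1 p.2)
        = fun p => JxL p.1 + JyL p.2 := by
      funext p; rw [JxL_apply, JyL_apply, joinE_add, add_zero, zero_add]
    rw [he]
    exact (JxL.continuous.comp continuous_fst).add (JyL.continuous.comp continuous_snd)
  rw [himg]
  exact ((hX.prod hY).image hcont).isBounded

end Projection

set_option maxHeartbeats 1000000

/-- **Lemma 6: single-step ZOCEG bound.**
Under the min-max setup with `f` `L`-smooth and `0 < ηL ≤ 1/2`, one ZOCEG step from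
`z_k = (x_k, y_k) ∈ Z` with smoothing radius `r_k > 0` satisfies, for every `z ∈ Z`,
`⟨η F(z_k^+), z_k^+ - z⟩ ≤ H_k(z) - H_{k+1}(z) + (3/2) η L r_k (√d_x + √d_y) D̃`. -/
theorem zoceg_single_step_bound
    {dx dy : ℕ} (hdx : 0 < dx) (hdy : 0 < dy)
    (X : Set (Euc dx)) (Y : Set (Euc dy))
    (hXne : X.Nonempty) (hXcomp : IsCompact X) (hXconv : Convex ℝ X)
    (hYne : Y.Nonempty) (hYcomp : IsCompact Y) (hYconv : Convex ℝ Y)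
    (f : Euc dx → Euc dy → ℝ)
    (hfC1 : ContDiff ℝ 1 (fjoin f))
    (hconv : ∀ y ∈ Y, ConvexOn ℝ Set.univ fun x => f x y)
    (hconc : ∀ x ∈ X, ConcaveOn ℝ Set.univ fun y => f x y)
    (L : ℝ)
    (hsmooth : ∀ z₁ z₂ : Euc (dx + dy),
      ‖gradient (fjoin f) z₁ - gradient (fjoin f) z₂‖ ≤ L * ‖z₁ - z₂‖)
    (η : ℝ) (hηL0 : 0 < η * L) (hηL : η * L ≤ 1 / 2)
    (Dt : ℝ) (hDt : Dt = Metric.diam (Zprod X Y))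
    (PX : Euc dx → Euc dx) (hPX : IsProjOn X PX)
    (PY : Euc dy → Euc dy) (hPY : IsProjOn Y PY)
    (xk : Euc dx) (yk : Euc dy) (hxk : xk ∈ X) (hyk : yk ∈ Y)
    (r : ℝ) (hr : 0 < r)
    (xkp : Euc dx) (hxkp : xkp = PX (xk - η • cooGE (fun x' => f x' yk) r xk))
    (ykp : Euc dy) (hykp : ykp = PY (yk + η • cooGE (fun y' => f xk y') r yk))
    (xk1 : Euc dx) (hxk1 : xk1 = PX (xk - η • cooGE (fun x' => f x' ykp) r xkp))
    (yk1 : Euc dy) (hyk1 : yk1 = PY (yk + η • cooGE (fun y' => f xkp y') r ykp)) :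
    ∀ z ∈ Zprod X Y,
      ⟪η • Fop f (joinE xkp ykp), joinE xkp ykp - z⟫ ≤
        (1 / 2) * ‖joinE xk yk - z‖ ^ 2 - (1 / 2) * ‖joinE xk1 yk1 - z‖ ^ 2
          + (3 / 2) * η * L * r * (Real.sqrt dx + Real.sqrt dy) * Dt := by
  intro z hz
  -- positivity facts
  have hL0 : 0 ≤ L := by
    have h1 := hsmooth (EuclideanSpace.single (⟨0, by omega⟩ : Fin (dx + dy)) (1:ℝ)) 0
    have h2 : ‖EuclideanSpace.single (⟨0, by omega⟩ : Fin (dx + dy)) (1:ℝ) - 0‖ = 1 := by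
      simp [EuclideanSpace.norm_single]
    rw [h2, mul_one] at h1
    exact le_trans (norm_nonneg _) h1
  have hLpos : 0 < L := by
    rcases hL0.eq_or_lt with h | h
    · exfalso; rw [← h, mul_zero] at hηL0; exact lt_irrefl 0 hηL0
    · exact h
  have hη : 0 < η := by nlinarith
  have hd : Differentiable ℝ (fjoin f) := hfC1.differentiable one_ne_zero
  set S := Real.sqrt (dx : ℝ) + Real.sqrt (dy : ℝ) with hS
  have hS0 : 0 ≤ S := by rw [hS]; positivity
  have hDt0 : 0 ≤ Dt := hDt ▸ Metric.diam_nonneg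
  set K := η * L * r * S * Dt with hK
  set zk := joinE xk yk with hzk
  set g1 := joinE (cooGE (fun x' => f x' yk) r xk) (-(cooGE (fun y' => f xk y') r yk)) with hg1
  set zp := joinE xkp ykp with hzp
  set g2 := joinE (cooGE (fun x' => f x' ykp) r xkp) (-(cooGE (fun y' => f xkp y') r ykp)) with hg2
  set z1 := joinE xk1 yk1 with hz1
  clear_value S K zk g1 zp g2 z1
  -- projected-point representations
  have hu1 : zk - η • g1 = joinE (xk - η • cooGE (fun x' => f x' yk) r xk)
      (yk + η • cooGE (fun y' => f xk y') r yk) := by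
    rw [hzk, hg1, joinE_smul, joinE_sub, smul_neg, sub_neg_eq_add]
  have hu2 : zk - η • g2 = joinE (xk - η • cooGE (fun x' => f x' ykp) r xkp)
      (yk + η • cooGE (fun y' => f xkp y') r ykp) := by
    rw [hzk, hg2, joinE_smul, joinE_sub, smul_neg, sub_neg_eq_add]
  have hzp_proj : zp = joinE (PX (xpart (zk - η • g1))) (PY (ypart (zk - η • g1))) := by
    rw [hzp, hu1, xpart_joinE, ypart_joinE, hxkp, hykp]
  have hz1_proj : z1 = joinE (PX (xpart (zk - η • g2))) (PY (ypart (zk - η • g2))) := by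
    rw [hz1, hu2, xpart_joinE, ypart_joinE, hxk1, hyk1]
  -- memberships
  have hzkZ : zk ∈ Zprod X Y := by
    rw [hzk]; exact ⟨by simpa using hxk, by simpa using hyk⟩
  have hzpZ : zp ∈ Zprod X Y := by
    rw [hzp_proj]
    exact ⟨by simpa using (hPX _).1, by simpa using (hPY _).1⟩
  have hz1Z : z1 ∈ Zprod X Y := by
    rw [hz1_proj]
    exact ⟨by simpa using (hPX _).1, by simpa using (hPY _).1⟩
  -- diameter bound
  have hbdd : Bornology.IsBounded (Zprod X Y) := zprod_bounded hXcomp hYcomp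
  have hdiam : ∀ a ∈ Zprod X Y, ∀ b ∈ Zprod X Y, ‖a - b‖ ≤ Dt := by
    intro a ha b hb
    rw [hDt, ← dist_eq_norm]
    exact Metric.dist_le_diam_of_mem hbdd ha hb
  -- three-point inequalities
  have hviA : ⟪zk - η • g2 - z1, z - z1⟫ ≤ 0 := by
    rw [hz1_proj]
    exact joint_vi hXconv hYconv hPX hPY _ hz
  have hA := three_point hviA
  have hviB : ⟪zk - η • g1 - zp, z1 - zp⟫ ≤ 0 := by
    rw [hzp_proj]
    exact joint_vi hXconv hYconv hPX hPY _ hz1Z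
  have hB := three_point hviB
  -- estimator errors
  have herr1 : ‖g1 - Fop f zk‖ ≤ L * r / 2 * S := by
    rw [hg1, hzk, hS]; exact estimator_err f hd L hL0 hsmooth r hr xk yk
  have herr2 : ‖g2 - Fop f zp‖ ≤ L * r / 2 * S := by
    rw [hg2, hzp, hS]; exact estimator_err f hd L hL0 hsmooth r hr xkp ykp
  have hflip : ‖Fop f zp - Fop f zk‖ ≤ L * ‖zp - zk‖ := Fop_lip f hd L hsmooth zp zk
  have hg21 : ‖g2 - g1‖ ≤ L * r * S + L * ‖zp - zk‖ := by
    have h3 : g2 - g1 = (g2 - Fop f zp) + ((Fop f zp - Fop f zk) + (Fop f zk - g1)) := by abel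
    have h4 : ‖g2 - g1‖ ≤ ‖g2 - Fop f zp‖ + (‖Fop f zp - Fop f zk‖ + ‖Fop f zk - g1‖) := by
      rw [h3]
      exact le_trans (norm_add_le _ _) (add_le_add le_rfl (norm_add_le _ _))
    have h5 : ‖Fop f zk - g1‖ = ‖g1 - Fop f zk‖ := norm_sub_rev _ _
    rw [h5] at h4
    linarith
  -- decompositions of the inner product
  have hdec1 : ⟪η • Fop f zp, zp - z⟫
      = ⟪η • Fop f zp - η • g2, zp - z⟫ + ⟪η • g2, zp - z⟫ := by
    rw [inner_sub_left]; ring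
  have hdec2 : ⟪η • g2, zp - z⟫ = ⟪η • g2, zp - z1⟫ + ⟪η • g2, z1 - z⟫ := by
    rw [← inner_add_right]
    congr 1
    abel
  have hdec3 : ⟪η • g2, zp - z1⟫ = ⟪η • g1, zp - z1⟫ + ⟪η • g2 - η • g1, zp - z1⟫ := by
    rw [inner_sub_left]; ring
  -- error term C
  have hC : ⟪η • Fop f zp - η • g2, zp - z⟫ ≤ (1 / 2) * K := by
    have h4 : η • Fop f zp - η • g2 = η • (Fop f zp - g2) := (smul_sub η _ _).symm
    rw [h4, real_inner_smul_left]
    have h5 : ⟪Fop f zp - g2, zp - z⟫ ≤ ‖Fop f zp - g2‖ * ‖zp - z‖ := real_inner_le_norm _ _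
    have h6 : ‖Fop f zp - g2‖ ≤ L * r / 2 * S := by rw [norm_sub_rev]; exact herr2
    have h7 : ‖zp - z‖ ≤ Dt := hdiam zp hzpZ z hz
    have h8 : ‖Fop f zp - g2‖ * ‖zp - z‖ ≤ (L * r / 2 * S) * Dt :=
      mul_le_mul h6 h7 (norm_nonneg _)
        (mul_nonneg (by positivity) hS0)
    calc η * ⟪Fop f zp - g2, zp - z⟫ ≤ η * ((L * r / 2 * S) * Dt) :=
          mul_le_mul_of_nonneg_left (le_trans h5 h8) hη.le
      _ = (1 / 2) * K := by rw [hK]; ring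
  -- error term D
  have hD : ⟪η • g2 - η • g1, zp - z1⟫
      ≤ K + (1 / 4) * ‖zp - zk‖ ^ 2 + (1 / 4) * ‖zp - z1‖ ^ 2 := by
    have h4 : η • g2 - η • g1 = η • (g2 - g1) := (smul_sub η _ _).symm
    rw [h4, real_inner_smul_left]
    have h5 : ⟪g2 - g1, zp - z1⟫ ≤ ‖g2 - g1‖ * ‖zp - z1‖ := real_inner_le_norm _ _
    have h7 : ‖zp - z1‖ ≤ Dt := hdiam zp hzpZ z1 hz1Z
    have h9 : η * ⟪g2 - g1, zp - z1⟫
        ≤ η * ((L * r * S + L * ‖zp - zk‖) * ‖zp - z1‖) := by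
      apply mul_le_mul_of_nonneg_left _ hη.le
      exact le_trans h5 (mul_le_mul_of_nonneg_right hg21 (norm_nonneg _))
    have h10 : η * (L * r * S * ‖zp - z1‖) ≤ K := by
      have hc : (0:ℝ) ≤ η * L * r * S := by
        have := mul_nonneg (mul_nonneg (mul_nonneg hη.le hL0) hr.le) hS0
        linarith
      calc η * (L * r * S * ‖zp - z1‖) = η * L * r * S * ‖zp - z1‖ := by ring
        _ ≤ η * L * r * S * Dt := mul_le_mul_of_nonneg_left h7 hc
        _ = K := hK.symm
    have h11 : η * (L * (‖zp - zk‖ * ‖zp - z1‖))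
        ≤ (1 / 4) * ‖zp - zk‖ ^ 2 + (1 / 4) * ‖zp - z1‖ ^ 2 := by
      have hq : ‖zp - zk‖ * ‖zp - z1‖
          ≤ (1 / 2) * ‖zp - zk‖ ^ 2 + (1 / 2) * ‖zp - z1‖ ^ 2 := by
        have hexp : (‖zp - zk‖ - ‖zp - z1‖) ^ 2
            = ‖zp - zk‖ ^ 2 - 2 * (‖zp - zk‖ * ‖zp - z1‖) + ‖zp - z1‖ ^ 2 := by ring
        linarith [sq_nonneg (‖zp - zk‖ - ‖zp - z1‖), hexp]
      have hnn : 0 ≤ ‖zp - zk‖ * ‖zp - z1‖ :=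
        mul_nonneg (norm_nonneg _) (norm_nonneg _)
      have he : η * (L * (‖zp - zk‖ * ‖zp - z1‖)) = (η * L) * (‖zp - zk‖ * ‖zp - z1‖) := by
        ring
      have h2 : (η * L) * (‖zp - zk‖ * ‖zp - z1‖) ≤ (1 / 2) * (‖zp - zk‖ * ‖zp - z1‖) :=
        mul_le_mul_of_nonneg_right hηL hnn
      rw [he]
      linarith
    calc η * ⟪g2 - g1, zp - z1⟫
        ≤ η * ((L * r * S + L * ‖zp - zk‖) * ‖zp - z1‖) := h9
      _ = η * (L * r * S * ‖zp - z1‖) + η * (L * (‖zp - zk‖ * ‖zp - z1‖)) := by ring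
      _ ≤ K + ((1 / 4) * ‖zp - zk‖ ^ 2 + (1 / 4) * ‖zp - z1‖ ^ 2) := add_le_add h10 h11
      _ = K + (1 / 4) * ‖zp - zk‖ ^ 2 + (1 / 4) * ‖zp - z1‖ ^ 2 := by ring
  -- put everything together
  have hrevsq : ‖zp - zk‖ ^ 2 = ‖zk - zp‖ ^ 2 := by rw [norm_sub_rev]
  have hgoal : 3 / 2 * η * L * r * S * Dt = (1 / 2) * K + K := by rw [hK]; ring
  linarith [hA, hB, hC, hD, hdec1, hdec2, hdec3, hrevsq, hgoal,
    sq_nonneg ‖zp - z1‖, sq_nonneg ‖zk - zp‖]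


end
end

section
/- (Extra-gradient mid-step projection inequality.) Let Z ⊆ ℝ^d be a nonempty closed convex set, z_k ∈ Z, η > 0, and g, g⁺ ∈ ℝ^d. Define z⁺ = P_Z[z_k − η g] and z_{next} = P_Z[z_k − η g⁺], where P_Z is the Euclidean projection onto Z. Then ⟨η g⁺, z⁺ − z_{next}⟩ − (1/2)‖z_{next} − z_k‖² ≤ η² ‖g − g⁺‖². -/
set_option autoImplicit false

open scoped RealInnerProductSpace

noncomputable section

/-- Variational inequality for a nearest-point projection onto a convex set. -/
lemma isProjOn_inner_le_zero {d : ℕ} {Z : Set (Euc d)} (hZconv : Convex ℝ Z)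
    {P : Euc d → Euc d} (hP : IsProjOn Z P) (u : Euc d) :
    ∀ w ∈ Z, ⟪u - P u, w - P u⟫ ≤ 0 := by
  have h1 := (hP u).1
  haveI : Nonempty Z := ⟨⟨P u, h1⟩⟩
  have hinf : (⨅ w : Z, ‖u - w‖) = ‖u - P u‖ :=
    IsLeast.csInf_eq ⟨⟨⟨P u, h1⟩, rfl⟩, by
      rintro x ⟨w, rfl⟩
      simpa [dist_eq_norm] using (hP u).2 w w.2⟩
  rw [← norm_eq_iInf_iff_real_inner_le_zero hZconv h1, hinf]

/-- **Extra-gradient mid-step projection inequality.**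
Let `Z ⊆ ℝ^d` be nonempty closed convex, `z_k ∈ Z`, `η > 0`, and `g, g⁺ ∈ ℝ^d`. With
`z⁺ = P_Z (z_k - η g)` and `z_next = P_Z (z_k - η g⁺)`,
`⟨η g⁺, z⁺ - z_next⟩ - (1/2) ‖z_next - z_k‖² ≤ η² ‖g - g⁺‖²`. -/
theorem extragradient_midstep_projection_inequality
    {d : ℕ} (Z : Set (Euc d)) (hZne : Z.Nonempty) (hZclosed : IsClosed Z)
    (hZconv : Convex ℝ Z)
    (PZ : Euc d → Euc d) (hPZ : IsProjOn Z PZ)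
    (zk : Euc d) (hzk : zk ∈ Z) (η : ℝ) (hη : 0 < η) (g gp : Euc d) :
    ⟪η • gp, PZ (zk - η • g) - PZ (zk - η • gp)⟫
        - (1 / 2) * ‖PZ (zk - η • gp) - zk‖ ^ 2 ≤ η ^ 2 * ‖g - gp‖ ^ 2 := by
  set zp := PZ (zk - η • g) with hzp
  set zn := PZ (zk - η • gp) with hzn
  have hznZ := (hPZ (zk - η • gp)).1
  have h1 : ⟪(zk - η • g) - zp, zn - zp⟫ ≤ 0 :=
    isProjOn_inner_le_zero hZconv hPZ (zk - η • g) zn hznZ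
  have hsplit : ⟪(η:ℝ) • gp, zp - zn⟫
      = ⟪(η:ℝ) • g, zp - zn⟫ + ⟪(η:ℝ) • (gp - g), zp - zn⟫ := by
    rw [← inner_add_left]
    congr 1
    module
  have hg : ⟪(η:ℝ) • g, zp - zn⟫ ≤ ⟪zk - zp, zp - zn⟫ := by
    have heq : ⟪(zk - η • g) - zp, zn - zp⟫ = ⟪zk - zp, zn - zp⟫ - ⟪(η:ℝ) • g, zn - zp⟫ := by
      rw [← inner_sub_left]; congr 1; module
    have h2 : ⟪zk - zp, zn - zp⟫ = -⟪zk - zp, zp - zn⟫ := by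
      rw [← inner_neg_right]; congr 1; module
    have h3 : ⟪(η:ℝ) • g, zn - zp⟫ = -⟪(η:ℝ) • g, zp - zn⟫ := by
      rw [← inner_neg_right]; congr 1; module
    rw [heq, h2, h3] at h1
    linarith
  have hpol : ⟪zk - zp, zp - zn⟫
      = (‖zk - zn‖ * ‖zk - zn‖ - ‖zk - zp‖ * ‖zk - zp‖ - ‖zp - zn‖ * ‖zp - zn‖) / 2 := by
    have hsum : zk - zp + (zp - zn) = zk - zn := by module
    rw [real_inner_eq_norm_add_mul_self_sub_norm_mul_self_sub_norm_mul_self_div_two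
      (zk - zp) (zp - zn), hsum]
  have hcs : ⟪(η:ℝ) • (gp - g), zp - zn⟫ ≤ η * ‖g - gp‖ * ‖zp - zn‖ := by
    refine le_trans (real_inner_le_norm _ _) ?_
    rw [norm_smul, Real.norm_eq_abs, abs_of_pos hη, norm_sub_rev gp g]
  have hnrev : ‖zn - zk‖ ^ 2 = ‖zk - zn‖ * ‖zk - zn‖ := by
    rw [norm_sub_rev]; ring
  have hB2 : ‖zp - zn‖ ^ 2 = ‖zp - zn‖ * ‖zp - zn‖ := by ring
  have hyoung : η * ‖g - gp‖ * ‖zp - zn‖ ≤ η ^ 2 * ‖g - gp‖ ^ 2 + (1/4) * ‖zp - zn‖ ^ 2 := by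
    nlinarith [sq_nonneg (η * ‖g - gp‖ - ‖zp - zn‖ / 2)]
  have hA := mul_self_nonneg ‖zk - zp‖
  have hB := mul_self_nonneg ‖zp - zn‖
  linarith

end
end
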